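/- Let p be a prime, and in F_p set x = (1,0,0,0,0,0) and y = (0,1,0,0,0,0). Then x^p = (0,0,1,0,0,0), y^p = (0,0,0,1,0,0), (x,x,y) = (0,0,0,0,1,0), (x,y,y) = (0,0,0,0,0,1), and every element (a1,a2,a3,a4,a5,a6) of F_p equals (((((x^{n1}·y^{n2})·(x^p)^{n3})·(y^p)^{n4})·(x,x,y)^{n5})·(x,y,y)^{n6}), where ni ∈ {0,…,p−1} is the canonical representative of ai. -/

import Mathlib

/-- The modular overflow indicator `(a,b)_p`. -/
def ovf (p : ℕ) (a b : ZMod p) : ZMod p := if p ≤ a.val + b.val then 1 else 0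

/-- The carrier `(ℤ_p)⁶` of the loop `F_p`. -/
abbrev FpCarrier (p : ℕ) := ZMod p × ZMod p × ZMod p × ZMod p × ZMod p × ZMod p

/-- The multiplication of the loop `F_p`. -/
def fpMul (p : ℕ) : FpCarrier p → FpCarrier p → FpCarrier p
  | (a1, a2, a3, a4, a5, a6), (b1, b2, b3, b4, b5, b6) =>
    (a1 + b1, a2 + b2, a3 + b3 + ovf p a1 b1, a4 + b4 + ovf p a2 b2,
     a5 + b5 - a1 * b1 * (a2 + b2), a6 + b6 + a2 * b2 * (a1 + b1))

/-- Powers in `F_p`: `a^0 = 1`, `a^(n+1) = a·(a^n)`. -/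
def fpPow (p : ℕ) (a : FpCarrier p) : ℕ → FpCarrier p
  | 0 => (0, 0, 0, 0, 0, 0)
  | n + 1 => fpMul p a (fpPow p a n)

/-! The elements with vanishing first two coordinates form a central subgroup on which the
multiplication is plain addition, so their powers are multiples. Powers `x^n` for `n < p` stay in
the first coordinate, and the last step to `x^p` produces exactly one overflow carry into the third
coordinate. The swap `(a1,a2,a3,a4,a5,a6) ↦ (a2,a1,a4,a3,-a6,-a5)` is an automorphism of `F_p`
exchanging `x` and `y`, which transfers everything about `x` to `y`. The associators are computed
directly, and are determined uniquely because left multiplication in a loop is injective. -/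

lemma ovf_zero_left (p : ℕ) [NeZero p] (a : ZMod p) : ovf p 0 a = 0 := by
  simp [ovf, Nat.not_le.2 (ZMod.val_lt a)]

lemma ovf_zero_right (p : ℕ) [NeZero p] (a : ZMod p) : ovf p a 0 = 0 := by
  simp [ovf, Nat.not_le.2 (ZMod.val_lt a)]

lemma ovf_one_natCast_of_lt {p n : ℕ} (h : n + 1 < p) : ovf p 1 (n : ZMod p) = 0 := by
  have : Fact (1 < p) := ⟨by omega⟩
  rw [ovf, ZMod.val_one, ZMod.val_cast_of_lt (by omega), if_neg (by omega)]

lemma ovf_one_natCast_of_succ_eq {p n : ℕ} [Fact (1 < p)] (h : n + 1 = p) :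
    ovf p 1 (n : ZMod p) = 1 := by
  rw [ovf, ZMod.val_one, ZMod.val_cast_of_lt (by omega), if_pos (by omega)]

lemma fpMul_left_cancel {p : ℕ} {a t t' : FpCarrier p} (h : fpMul p a t = fpMul p a t') :
    t = t' := by
  obtain ⟨a1, a2, a3, a4, a5, a6⟩ := a
  obtain ⟨t1, t2, t3, t4, t5, t6⟩ := t
  obtain ⟨t1', t2', t3', t4', t5', t6'⟩ := t'
  simp only [fpMul, Prod.mk.injEq, add_right_inj] at h
  obtain ⟨rfl, rfl, h3, h4, h5, h6⟩ := h
  simp_all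

section Central

variable (p : ℕ) [NeZero p]

lemma fpMul_central (c d : ZMod p × ZMod p × ZMod p × ZMod p) :
    fpMul p (0, 0, c) (0, 0, d) = (0, 0, c + d) := by
  obtain ⟨c3, c4, c5, c6⟩ := c
  obtain ⟨d3, d4, d5, d6⟩ := d
  simp [fpMul, ovf_zero_left]

lemma fpPow_central (c : ZMod p × ZMod p × ZMod p × ZMod p) (n : ℕ) :
    fpPow p (0, 0, c) n = (0, 0, n • c) := by
  induction n with
  | zero => simp [fpPow]
  | succ n ih => rw [fpPow, ih, fpMul_central, succ_nsmul']

end Central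

lemma fpPow_x_of_lt {p n : ℕ} (h : n < p) :
    fpPow p (1, 0, 0, 0, 0, 0) n = ((n : ZMod p), 0, 0, 0, 0, 0) := by
  have : NeZero p := ⟨by omega⟩
  induction n with
  | zero => simp [fpPow]
  | succ n ih =>
    rw [fpPow, ih (by omega)]
    simp [fpMul, ovf_one_natCast_of_lt h, ovf_zero_left, add_comm]

lemma fpPow_x_self (p : ℕ) [Fact (1 < p)] :
    fpPow p (1, 0, 0, 0, 0, 0) p = (0, 0, 1, 0, 0, 0) := by
  obtain ⟨n, rfl⟩ : ∃ n, n + 1 = p := ⟨p - 1, Nat.sub_add_cancel (Fact.out : 1 < p).le⟩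
  have hcarry : (1 : ZMod (n + 1)) + n = 0 := by
    have h := ZMod.natCast_self (n + 1)
    push_cast at h
    linear_combination h
  rw [fpPow, fpPow_x_of_lt (Nat.lt_succ_self n)]
  simp [fpMul, ovf_one_natCast_of_succ_eq rfl, ovf_zero_left, hcarry]

def fpSwap (p : ℕ) : FpCarrier p → FpCarrier p
  | (a1, a2, a3, a4, a5, a6) => (a2, a1, a4, a3, -a6, -a5)

lemma fpSwap_fpMul (p : ℕ) (a b : FpCarrier p) :
    fpSwap p (fpMul p a b) = fpMul p (fpSwap p a) (fpSwap p b) := by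
  obtain ⟨a1, a2, a3, a4, a5, a6⟩ := a
  obtain ⟨b1, b2, b3, b4, b5, b6⟩ := b
  simp only [fpSwap, fpMul, Prod.mk.injEq, true_and]
  constructor <;> ring

lemma fpSwap_fpPow (p : ℕ) (a : FpCarrier p) (n : ℕ) :
    fpSwap p (fpPow p a n) = fpPow p (fpSwap p a) n := by
  induction n with
  | zero => simp [fpPow, fpSwap]
  | succ n ih => rw [fpPow, fpSwap_fpMul, ih, fpPow]

lemma fpPow_y_eq_fpSwap (p : ℕ) (n : ℕ) :
    fpPow p (0, 1, 0, 0, 0, 0) n = fpSwap p (fpPow p (1, 0, 0, 0, 0, 0) n) := by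
  rw [fpSwap_fpPow]; simp [fpSwap]

lemma fpPow_y_of_lt {p n : ℕ} (h : n < p) :
    fpPow p (0, 1, 0, 0, 0, 0) n = (0, (n : ZMod p), 0, 0, 0, 0) := by
  simp [fpPow_y_eq_fpSwap, fpPow_x_of_lt h, fpSwap]

lemma fpPow_y_self (p : ℕ) [Fact (1 < p)] :
    fpPow p (0, 1, 0, 0, 0, 0) p = (0, 0, 0, 1, 0, 0) := by
  simp [fpPow_y_eq_fpSwap, fpPow_x_self, fpSwap]

/-- With `x = (1,0,0,0,0,0)`, `y = (0,1,0,0,0,0)` in `F_p`: the values of `x^p`, `y^p`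
and of the associators `(x,x,y)`, `(x,y,y)` (characterized as the unique solutions `t` of
`(x·(x·y))·t = (x·x)·y`, resp. `(x·(y·y))·t = (x·y)·y`), and the canonical form
`(a1,…,a6) = ((((x^{n1}·y^{n2})·(x^p)^{n3})·(y^p)^{n4})·(x,x,y)^{n5})·(x,y,y)^{n6}`,
where `ni` is the canonical representative of `ai`. -/
theorem stmt_10 (p : ℕ) (hp : p.Prime) :
    let x : FpCarrier p := (1, 0, 0, 0, 0, 0)
    let y : FpCarrier p := (0, 1, 0, 0, 0, 0)
    fpPow p x p = (0, 0, 1, 0, 0, 0) ∧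
    fpPow p y p = (0, 0, 0, 1, 0, 0) ∧
    (∀ t, fpMul p (fpMul p x (fpMul p x y)) t = fpMul p (fpMul p x x) y →
      t = (0, 0, 0, 0, 1, 0)) ∧
    (∀ t, fpMul p (fpMul p x (fpMul p y y)) t = fpMul p (fpMul p x y) y →
      t = (0, 0, 0, 0, 0, 1)) ∧
    (∀ a1 a2 a3 a4 a5 a6 : ZMod p,
      (a1, a2, a3, a4, a5, a6) =
        fpMul p
          (fpMul p
            (fpMul p
              (fpMul p
                (fpMul p (fpPow p x a1.val) (fpPow p y a2.val))
                (fpPow p (fpPow p x p) a3.val))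
              (fpPow p (fpPow p y p) a4.val))
            (fpPow p ((0, 0, 0, 0, 1, 0) : FpCarrier p) a5.val))
          (fpPow p ((0, 0, 0, 0, 0, 1) : FpCarrier p) a6.val)) := by
  have : Fact (1 < p) := ⟨hp.one_lt⟩
  intro x y
  have hxxy :
      fpMul p (fpMul p x (fpMul p x y)) (0, 0, 0, 0, 1, 0) = fpMul p (fpMul p x x) y := by
    simp [x, y, fpMul, ovf_zero_left, ovf_zero_right]
  have hxyy :
      fpMul p (fpMul p x (fpMul p y y)) (0, 0, 0, 0, 0, 1) = fpMul p (fpMul p x y) y := by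
    simp [x, y, fpMul, ovf_zero_left, ovf_zero_right]
  refine ⟨fpPow_x_self p, fpPow_y_self p,
    fun t ht => fpMul_left_cancel (ht.trans hxxy.symm),
    fun t ht => fpMul_left_cancel (ht.trans hxyy.symm), ?_⟩
  intro a1 a2 a3 a4 a5 a6
  simp [x, y, fpPow_x_of_lt (ZMod.val_lt a1), fpPow_y_of_lt (ZMod.val_lt a2), fpPow_x_self,
    fpPow_y_self, fpPow_central, fpMul, ovf_zero_left, ovf_zero_right]
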